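/- arXiv:1501.04191 — 2 statements merged into one kernel-verified Lean document; each statement's English description precedes it below -/
import Mathlib

section
/- Let A = {(t,0) : t ≥ 0} ∪ {(t,−t) : t ≥ 0} and B = {(t,0) : t ≥ 0} ∪ {(t,t) : t ≥ 0} in ℝ² with the Euclidean norm. Then for every a = (t₁,−t₁) with t₁ > 0 and b = (t₂,t₂) with t₂ > 0, every unit u ∈ N_A(a) and unit v ∈ N_B(b), one has min{ ⟨b − a, u⟩, ⟨a − b, v⟩ } ≤ (1/√2)‖a − b‖; hence {A,B} is DIL-restrictedly regular at the origin. -/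
open Metric RealInnerProductSpace

/-- The Fréchet normal cone to `A` at `a`, in ε-δ form. -/
def frechetNormalCone {X : Type*} [NormedAddCommGroup X] [InnerProductSpace ℝ X]
    (A : Set X) (a : X) : Set X :=
  {u | ∀ ε > 0, ∃ δ > 0, ∀ x ∈ A, ‖x - a‖ < δ → ⟪u, x - a⟫ ≤ ε * ‖x - a‖}

noncomputable abbrev e2 (s t : ℝ) : EuclideanSpace ℝ (Fin 2) :=
  (WithLp.equiv 2 (Fin 2 → ℝ)).symm ![s, t]

lemma e2_sub (s t s' t' : ℝ) : e2 s t - e2 s' t' = e2 (s-s') (t-t') := by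
  ext i; fin_cases i <;> simp [e2]

lemma e2_norm (s t : ℝ) : ‖e2 s t‖ = Real.sqrt (s^2 + t^2) := by
  simp [EuclideanSpace.norm_eq, Fin.sum_univ_two, e2, sq_abs]

lemma e2_inner (u : EuclideanSpace ℝ (Fin 2)) (s t : ℝ) :
    ⟪u, e2 s t⟫ = u 0 * s + u 1 * t := by
  simp [PiLp.inner_apply, Fin.sum_univ_two, e2]; ring

lemma e2_inner' (u : EuclideanSpace ℝ (Fin 2)) (s t : ℝ) :
    ⟪e2 s t, u⟫ = s * u 0 + t * u 1 := by
  simp [PiLp.inner_apply, Fin.sum_univ_two, e2]; ring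

lemma unit_sq (u : EuclideanSpace ℝ (Fin 2)) (h : ‖u‖ = 1) : (u 0)^2 + (u 1)^2 = 1 := by
  have h2 : Real.sqrt ((u 0)^2 + (u 1)^2) = 1 := by
    simpa [EuclideanSpace.norm_eq, Fin.sum_univ_two, sq_abs] using h
  exact Real.sqrt_eq_one.mp h2

/-- Along a line direction inside the set, a Fréchet normal is perpendicular. -/
lemma normal_perp (A : Set (EuclideanSpace ℝ (Fin 2))) (t : ℝ) (ht : 0 < t) (c : ℝ)
    (hA : ∀ s, 0 ≤ s → e2 s (c*s) ∈ A) (u : EuclideanSpace ℝ (Fin 2))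
    (hu : u ∈ frechetNormalCone A (e2 t (c*t))) : u 0 + c * u 1 = 0 := by
  set L := Real.sqrt (1 + c^2) with hLdef
  have hL : 0 < L := Real.sqrt_pos.mpr (by positivity)
  have key : ∀ ε > 0, |u 0 + c * u 1| ≤ ε * L := by
    intro ε hε
    obtain ⟨δ, hδ, hδ'⟩ := hu ε hε
    set s := min t (δ / (2*L)) with hs
    have hs0 : 0 < s := lt_min ht (by positivity)
    have hst : s ≤ t := min_le_left _ _
    have hsδ : s * L < δ := by
      have : s ≤ δ / (2*L) := min_le_right _ _
      calc s * L ≤ (δ / (2*L)) * L := by nlinarith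
        _ = δ / 2 := by field_simp
        _ < δ := by linarith
    have hnorm : ∀ σ : ℝ, ‖(e2 σ (c*σ) : EuclideanSpace ℝ (Fin 2))‖ = |σ| * L := by
      intro σ
      rw [e2_norm, hLdef, ← Real.sqrt_sq_eq_abs, ← Real.sqrt_mul (sq_nonneg σ)]
      ring_nf
    have h1 : s * (u 0 + c * u 1) ≤ ε * (s * L) := by
      have hmem := hA (t + s) (by linarith)
      have hdiff : e2 (t+s) (c*(t+s)) - e2 t (c*t) = e2 s (c*s) := by
        rw [e2_sub]; ring_nf
      have := hδ' _ hmem (by rw [hdiff, hnorm, abs_of_pos hs0]; exact hsδ)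
      rw [hdiff, e2_inner, hnorm, abs_of_pos hs0] at this
      calc s * (u 0 + c * u 1) = u 0 * s + u 1 * (c * s) := by ring
        _ ≤ ε * (s * L) := this
    have h2 : -(s * (u 0 + c * u 1)) ≤ ε * (s * L) := by
      have hmem := hA (t - s) (by linarith)
      have hdiff : e2 (t-s) (c*(t-s)) - e2 t (c*t) = e2 (-s) (c*(-s)) := by
        rw [e2_sub]; ring_nf
      have := hδ' _ hmem (by rw [hdiff, hnorm, abs_neg, abs_of_pos hs0]; exact hsδ)
      rw [hdiff, e2_inner, hnorm, abs_neg, abs_of_pos hs0] at this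
      calc -(s * (u 0 + c * u 1)) = u 0 * (-s) + u 1 * (c * (-s)) := by ring
        _ ≤ ε * (s * L) := this
    have habs : s * |u 0 + c * u 1| ≤ ε * (s * L) := by
      rcases abs_cases (u 0 + c * u 1) with ⟨h, _⟩ | ⟨h, _⟩ <;> rw [h] <;> linarith
    nlinarith
  by_contra h
  have habs : 0 < |u 0 + c * u 1| := abs_pos.mpr h
  have hk := key (|u 0 + c * u 1| / (2*L)) (by positivity)
  have heq : |u 0 + c * u 1| / (2*L) * L = |u 0 + c * u 1| / 2 := by
    field_simp
  rw [heq] at hk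
  linarith

def Aset : Set (EuclideanSpace ℝ (Fin 2)) :=
  {p | ∃ t ≥ (0:ℝ), p = e2 t 0} ∪ {p | ∃ t ≥ (0:ℝ), p = e2 t (-t)}
def Bset : Set (EuclideanSpace ℝ (Fin 2)) :=
  {p | ∃ t ≥ (0:ℝ), p = e2 t 0} ∪ {p | ∃ t ≥ (0:ℝ), p = e2 t t}

lemma main_est (t₁ t₂ : ℝ) (ht₁ : 0 < t₁) (ht₂ : 0 < t₂)
    (u : EuclideanSpace ℝ (Fin 2)) (hu : u ∈ frechetNormalCone Aset (e2 t₁ (-t₁)))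
    (hu1 : ‖u‖ = 1)
    (v : EuclideanSpace ℝ (Fin 2)) (hv : v ∈ frechetNormalCone Bset (e2 t₂ t₂))
    (hv1 : ‖v‖ = 1) :
    min ⟪e2 t₂ t₂ - e2 t₁ (-t₁), u⟫ ⟪e2 t₁ (-t₁) - e2 t₂ t₂, v⟫ ≤
      (1 / Real.sqrt 2) * ‖e2 t₁ (-t₁) - e2 t₂ t₂‖ := by
  have hs2 : (0:ℝ) < Real.sqrt 2 := Real.sqrt_pos.mpr (by norm_num)
  have hsq2 : (Real.sqrt 2)^2 = 2 := Real.sq_sqrt (by norm_num)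
  -- normals are perpendicular to the rays
  have hu' : u 0 + (-1) * u 1 = 0 := by
    refine normal_perp Aset t₁ ht₁ (-1) (fun s hs => Or.inr ⟨s, hs, by rw [neg_one_mul]⟩) u ?_
    rw [show ((-1:ℝ)) * t₁ = -t₁ from neg_one_mul t₁]; exact hu
  have hv' : v 0 + 1 * v 1 = 0 := by
    refine normal_perp Bset t₂ ht₂ 1 (fun s hs => Or.inr ⟨s, hs, by rw [one_mul]⟩) v ?_
    rw [one_mul]; exact hv
  have hu01 : u 0 = u 1 := by linarith
  have hv01 : v 0 = -(v 1) := by linarith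
  have hU := unit_sq u hu1
  have hV := unit_sq v hv1
  have hU2 : 2 * (u 1)^2 = 1 := by rw [hu01] at hU; linarith
  have hV2 : 2 * (v 1)^2 = 1 := by rw [hv01] at hV; nlinarith [hV]
  -- the two inner products
  have hX : ⟪e2 t₂ t₂ - e2 t₁ (-t₁), u⟫ ≤ Real.sqrt 2 * t₂ := by
    rw [e2_sub, e2_inner', hu01]
    have h1 : Real.sqrt 2 * u 1 ≤ 1 := by
      nlinarith [sq_nonneg (Real.sqrt 2 - 2 * u 1)]
    nlinarith [mul_le_mul_of_nonneg_left h1 (mul_nonneg hs2.le ht₂.le)]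
  have hY : ⟪e2 t₁ (-t₁) - e2 t₂ t₂, v⟫ ≤ Real.sqrt 2 * t₁ := by
    rw [e2_sub, e2_inner', hv01]
    have h1 : Real.sqrt 2 * (-(v 1)) ≤ 1 := by
      nlinarith [sq_nonneg (Real.sqrt 2 + 2 * v 1)]
    nlinarith [mul_le_mul_of_nonneg_left h1 (mul_nonneg hs2.le ht₁.le)]
  -- the right-hand side
  have hRHS : (1 / Real.sqrt 2) * ‖e2 t₁ (-t₁) - e2 t₂ t₂‖
      = Real.sqrt (t₁^2 + t₂^2) := by
    rw [e2_sub, e2_norm]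
    have : (t₁ - t₂)^2 + (-t₁ - t₂)^2 = 2 * (t₁^2 + t₂^2) := by ring
    rw [this, Real.sqrt_mul (by norm_num)]
    field_simp
  rw [hRHS]
  rcases le_total t₁ t₂ with h | h
  · refine min_le_of_right_le (hY.trans ?_)
    have : Real.sqrt 2 * t₁ = Real.sqrt (2 * t₁^2) := by
      rw [Real.sqrt_mul (by norm_num), Real.sqrt_sq ht₁.le]
    rw [this]
    exact Real.sqrt_le_sqrt (by nlinarith)
  · refine min_le_of_left_le (hX.trans ?_)
    have : Real.sqrt 2 * t₂ = Real.sqrt (2 * t₂^2) := by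
      rw [Real.sqrt_mul (by norm_num), Real.sqrt_sq ht₂.le]
    rw [this]
    exact Real.sqrt_le_sqrt (by nlinarith)


/-- With `A = {(t,0) : t ≥ 0} ∪ {(t,-t) : t ≥ 0}` and `B = {(t,0) : t ≥ 0} ∪ {(t,t) : t ≥ 0}`
in ℝ²: for all `a = (t₁,-t₁)`, `b = (t₂,t₂)` with `t₁, t₂ > 0` and all unit normals
`u ∈ N_A(a)`, `v ∈ N_B(b)`, one has `min{⟪b-a,u⟫, ⟪a-b,v⟫} ≤ (1/√2)‖a-b‖`;
hence `{A,B}` is DIL-restrictedly regular at the origin. -/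
theorem stmt_9 :
    let A : Set (EuclideanSpace ℝ (Fin 2)) :=
      {p | ∃ t ≥ (0:ℝ), p = e2 t 0} ∪ {p | ∃ t ≥ (0:ℝ), p = e2 t (-t)}
    let B : Set (EuclideanSpace ℝ (Fin 2)) :=
      {p | ∃ t ≥ (0:ℝ), p = e2 t 0} ∪ {p | ∃ t ≥ (0:ℝ), p = e2 t t}
    (∀ t₁ > (0:ℝ), ∀ t₂ > (0:ℝ),
      ∀ u ∈ frechetNormalCone A (e2 t₁ (-t₁)), ‖u‖ = 1 →
      ∀ v ∈ frechetNormalCone B (e2 t₂ t₂), ‖v‖ = 1 →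
        min ⟪e2 t₂ t₂ - e2 t₁ (-t₁), u⟫ ⟪e2 t₁ (-t₁) - e2 t₂ t₂, v⟫ ≤
          (1 / Real.sqrt 2) * ‖e2 t₁ (-t₁) - e2 t₂ t₂‖) ∧
    (∃ α < (1:ℝ), ∃ δ > (0:ℝ),
      ∀ a ∈ (A \ B) ∩ ball (0 : EuclideanSpace ℝ (Fin 2)) δ,
      ∀ b ∈ (B \ A) ∩ ball (0 : EuclideanSpace ℝ (Fin 2)) δ,
      ∀ u ∈ frechetNormalCone A a, ‖u‖ = 1 →
      ∀ v ∈ frechetNormalCone B b, ‖v‖ = 1 →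
        min ⟪b - a, u⟫ ⟪a - b, v⟫ < α * ‖a - b‖) := by
  intro A B
  constructor
  · intro t₁ ht₁ t₂ ht₂ u hu hu1 v hv hv1
    exact main_est t₁ t₂ ht₁ ht₂ u hu hu1 v hv hv1
  · refine ⟨3/4, by norm_num, 1, one_pos, ?_⟩
    rintro a ⟨⟨haA, haB⟩, -⟩ b ⟨⟨hbB, hbA⟩, -⟩ u hu hu1 v hv hv1
    -- a lies on the ray {(t,-t) : t > 0}
    obtain ⟨t₁, ht₁, ht₁', rfl⟩ : ∃ t₁, 0 ≤ t₁ ∧ 0 < t₁ ∧ a = e2 t₁ (-t₁) := by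
      rcases haA with ⟨t, ht, rfl⟩ | ⟨t, ht, rfl⟩
      · exact absurd (Or.inl ⟨t, ht, rfl⟩) haB
      · refine ⟨t, ht, ?_, rfl⟩
        rcases ht.lt_or_eq with h | h
        · exact h
        · exact absurd (Or.inl ⟨t, ht, by rw [← h, neg_zero]⟩) haB
    obtain ⟨t₂, ht₂, ht₂', rfl⟩ : ∃ t₂, 0 ≤ t₂ ∧ 0 < t₂ ∧ b = e2 t₂ t₂ := by
      rcases hbB with ⟨t, ht, rfl⟩ | ⟨t, ht, rfl⟩
      · exact absurd (Or.inl ⟨t, ht, rfl⟩) hbA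
      · refine ⟨t, ht, ?_, rfl⟩
        rcases ht.lt_or_eq with h | h
        · exact h
        · exact absurd (Or.inl ⟨t, ht, by rw [← h]⟩) hbA
    have hmain := main_est t₁ t₂ ht₁' ht₂' u hu hu1 v hv hv1
    have hn : 0 < ‖e2 t₁ (-t₁) - e2 t₂ t₂‖ := by
      rw [e2_sub, e2_norm]
      exact Real.sqrt_pos.mpr (by nlinarith)
    have h43 : (4:ℝ)/3 < Real.sqrt 2 := by
      nlinarith [Real.sq_sqrt (by norm_num : (0:ℝ) ≤ 2), Real.sqrt_nonneg 2]
    have hc : (1:ℝ) / Real.sqrt 2 < 3/4 := by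
      rw [div_lt_div_iff₀ (Real.sqrt_pos.mpr (by norm_num)) (by norm_num)]
      linarith
    calc min ⟪e2 t₂ t₂ - e2 t₁ (-t₁), u⟫ ⟪e2 t₁ (-t₁) - e2 t₂ t₂, v⟫
        ≤ (1 / Real.sqrt 2) * ‖e2 t₁ (-t₁) - e2 t₂ t₂‖ := hmain
      _ < (3/4) * ‖e2 t₁ (-t₁) - e2 t₂ t₂‖ := by
          exact mul_lt_mul_of_pos_right hc hn
end

section
/- Let A = {(t,0) : t ≥ 0} ∪ {(t,−t) : t ≥ 0} and B = {(t,0) : t ≥ 0} ∪ {(t,t) : t ≥ 0} in ℝ² with the Euclidean norm. For every a ∈ A\B, b ∈ B\A, b_a ∈ P_B(a), a_b ∈ P_A(b), one has (b − a_b)/‖b − a_b‖ = (b_a − a)/‖b_a − a‖; consequently {A,B} is not BLPW-DIL-restrictedly regular at the origin. -/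
open Metric RealInnerProductSpace

/-- The metric projection of `x` on `A`. -/
noncomputable def projSet {X : Type*} [NormedAddCommGroup X] [InnerProductSpace ℝ X]
    (A : Set X) (x : X) : Set X :=
  {a ∈ A | ‖x - a‖ = infDist x A}

lemma e2_sub_s10 (x y u v : ℝ) : e2 x y - e2 u v = e2 (x-u) (y-v) := by
  ext i; fin_cases i <;> rfl

lemma e2_smul (r x y : ℝ) : r • e2 x y = e2 (r*x) (r*y) := by
  ext i; fin_cases i <;> rfl

lemma norm_e2 (x y : ℝ) : ‖e2 x y‖ = Real.sqrt (x^2 + y^2) := by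
  rw [EuclideanSpace.norm_eq]; simp [Fin.sum_univ_two, sq_abs]

lemma inner_e2 (x y u v : ℝ) : ⟪e2 x y, e2 u v⟫ = x*u + y*v := by
  simp [PiLp.inner_apply, Fin.sum_univ_two, RCLike.inner_apply]; ring

lemma e2_inj {x y u v : ℝ} (h : e2 x y = e2 u v) : x = u ∧ y = v :=
  ⟨congrArg (fun p => p 0) h, congrArg (fun p => p 1) h⟩

lemma e2_congr {x y u v : ℝ} (h1 : x = u) (h2 : y = v) : e2 x y = e2 u v := by
  rw [h1, h2]

/-- With `A = {(t,0) : t ≥ 0} ∪ {(t,-t) : t ≥ 0}` and `B = {(t,0) : t ≥ 0} ∪ {(t,t) : t ≥ 0}`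
in ℝ²: for all `a ∈ A \ B`, `b ∈ B \ A`, `b_a ∈ P_B(a)`, `a_b ∈ P_A(b)` one has
`(b - a_b)/‖b - a_b‖ = (b_a - a)/‖b_a - a‖`; consequently `{A,B}` is not
BLPW-DIL-restrictedly regular at the origin. -/
theorem stmt_10 :
    let A : Set (EuclideanSpace ℝ (Fin 2)) :=
      {p | ∃ t ≥ (0:ℝ), p = e2 t 0} ∪ {p | ∃ t ≥ (0:ℝ), p = e2 t (-t)}
    let B : Set (EuclideanSpace ℝ (Fin 2)) :=
      {p | ∃ t ≥ (0:ℝ), p = e2 t 0} ∪ {p | ∃ t ≥ (0:ℝ), p = e2 t t}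
    (∀ a ∈ A \ B, ∀ b ∈ B \ A, ∀ ba ∈ projSet B a, ∀ ab ∈ projSet A b,
        ‖b - ab‖⁻¹ • (b - ab) = ‖ba - a‖⁻¹ • (ba - a)) ∧
    ¬ (∃ α < (1:ℝ), ∃ δ > (0:ℝ),
        ∀ a ∈ (A \ B) ∩ ball (0 : EuclideanSpace ℝ (Fin 2)) δ,
        ∀ b ∈ (B \ A) ∩ ball (0 : EuclideanSpace ℝ (Fin 2)) δ,
        ∀ ba ∈ projSet B a, ∀ ab ∈ projSet A b,
          -⟪a - ba, b - ab⟫ < α * ‖a - ba‖ * ‖b - ab‖) := by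
  intro A B
  have hBne : B.Nonempty := ⟨e2 0 0, Or.inl ⟨0, le_refl 0, rfl⟩⟩
  have hAne : A.Nonempty := ⟨e2 0 0, Or.inl ⟨0, le_refl 0, rfl⟩⟩
  have infB : ∀ t : ℝ, 0 < t → infDist (e2 t (-t)) B = t := by
    intro t ht
    apply le_antisymm
    · have hm : e2 t 0 ∈ B := Or.inl ⟨t, ht.le, rfl⟩
      calc infDist (e2 t (-t)) B ≤ dist (e2 t (-t)) (e2 t 0) := infDist_le_dist_of_mem hm
        _ = t := by
          rw [dist_eq_norm, e2_sub_s10, norm_e2]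
          rw [show (t-t)^2 + (-t-0)^2 = t^2 by ring, Real.sqrt_sq ht.le]
    · refine not_lt.1 fun hlt => ?_
      rw [infDist_lt_iff hBne] at hlt
      obtain ⟨p, hp, hd⟩ := hlt
      rcases hp with ⟨s, hs, rfl⟩ | ⟨s, hs, rfl⟩ <;>
        rw [dist_eq_norm, e2_sub_s10, norm_e2] at hd
      · nlinarith [Real.sq_sqrt (show (0:ℝ) ≤ (t-s)^2+(-t-0)^2 by positivity),
          Real.sqrt_nonneg ((t-s)^2+(-t-0)^2)]
      · nlinarith [Real.sq_sqrt (show (0:ℝ) ≤ (t-s)^2+(-t-s)^2 by positivity),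
          Real.sqrt_nonneg ((t-s)^2+(-t-s)^2)]
  have infA : ∀ t : ℝ, 0 < t → infDist (e2 t t) A = t := by
    intro t ht
    apply le_antisymm
    · have hm : e2 t 0 ∈ A := Or.inl ⟨t, ht.le, rfl⟩
      calc infDist (e2 t t) A ≤ dist (e2 t t) (e2 t 0) := infDist_le_dist_of_mem hm
        _ = t := by
          rw [dist_eq_norm, e2_sub_s10, norm_e2]
          rw [show (t-t)^2 + (t-0)^2 = t^2 by ring, Real.sqrt_sq ht.le]
    · refine not_lt.1 fun hlt => ?_
      rw [infDist_lt_iff hAne] at hlt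
      obtain ⟨p, hp, hd⟩ := hlt
      rcases hp with ⟨s, hs, rfl⟩ | ⟨s, hs, rfl⟩ <;>
        rw [dist_eq_norm, e2_sub_s10, norm_e2] at hd
      · nlinarith [Real.sq_sqrt (show (0:ℝ) ≤ (t-s)^2+(t-0)^2 by positivity),
          Real.sqrt_nonneg ((t-s)^2+(t-0)^2)]
      · nlinarith [Real.sq_sqrt (show (0:ℝ) ≤ (t-s)^2+(t - -s)^2 by positivity),
          Real.sqrt_nonneg ((t-s)^2+(t - -s)^2)]
  have projB : ∀ t : ℝ, 0 < t → ∀ ba ∈ projSet B (e2 t (-t)), ba = e2 t 0 := by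
    intro t ht ba hba
    obtain ⟨hmem, hdist⟩ := hba
    rw [infB t ht] at hdist
    rcases hmem with ⟨s, hs, rfl⟩ | ⟨s, hs, rfl⟩
    · rw [e2_sub_s10, norm_e2] at hdist
      have h2 : (t-s)^2 + (-t-0)^2 = t^2 := by
        rw [← Real.sq_sqrt (show (0:ℝ) ≤ (t-s)^2+(-t-0)^2 by positivity), hdist]
      exact e2_congr (by nlinarith) rfl
    · rw [e2_sub_s10, norm_e2] at hdist
      have h2 : (t-s)^2 + (-t-s)^2 = t^2 := by
        rw [← Real.sq_sqrt (show (0:ℝ) ≤ (t-s)^2+(-t-s)^2 by positivity), hdist]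
      nlinarith
  have projA : ∀ t : ℝ, 0 < t → ∀ ab ∈ projSet A (e2 t t), ab = e2 t 0 := by
    intro t ht ab hab
    obtain ⟨hmem, hdist⟩ := hab
    rw [infA t ht] at hdist
    rcases hmem with ⟨s, hs, rfl⟩ | ⟨s, hs, rfl⟩
    · rw [e2_sub_s10, norm_e2] at hdist
      have h2 : (t-s)^2 + (t-0)^2 = t^2 := by
        rw [← Real.sq_sqrt (show (0:ℝ) ≤ (t-s)^2+(t-0)^2 by positivity), hdist]
      exact e2_congr (by nlinarith) rfl
    · rw [e2_sub_s10, norm_e2] at hdist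
      have h2 : (t-s)^2 + (t - -s)^2 = t^2 := by
        rw [← Real.sq_sqrt (show (0:ℝ) ≤ (t-s)^2+(t - -s)^2 by positivity), hdist]
      nlinarith
  have memAB : ∀ a ∈ A \ B, ∃ t : ℝ, 0 < t ∧ a = e2 t (-t) := by
    rintro a ⟨(⟨s, hs, rfl⟩ | ⟨s, hs, rfl⟩), hnb⟩
    · exact absurd (Or.inl ⟨s, hs, rfl⟩) hnb
    · refine ⟨s, ?_, rfl⟩
      rcases hs.lt_or_eq with h | h
      · exact h
      · exact absurd (Or.inl ⟨s, hs, e2_congr rfl (by rw [← h]; norm_num)⟩) hnb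
  have memBA : ∀ b ∈ B \ A, ∃ t : ℝ, 0 < t ∧ b = e2 t t := by
    rintro b ⟨(⟨s, hs, rfl⟩ | ⟨s, hs, rfl⟩), hna⟩
    · exact absurd (Or.inl ⟨s, hs, rfl⟩) hna
    · refine ⟨s, ?_, rfl⟩
      rcases hs.lt_or_eq with h | h
      · exact h
      · exact absurd (Or.inl ⟨s, hs, e2_congr rfl h.symm⟩) hna
  -- projection membership facts
  have projBmem : ∀ t : ℝ, 0 < t → e2 t 0 ∈ projSet B (e2 t (-t)) := by
    intro t ht
    refine ⟨Or.inl ⟨t, ht.le, rfl⟩, ?_⟩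
    rw [infB t ht, e2_sub_s10, norm_e2,
      show (t-t)^2 + (-t-0)^2 = t^2 by ring, Real.sqrt_sq ht.le]
  have projAmem : ∀ t : ℝ, 0 < t → e2 t 0 ∈ projSet A (e2 t t) := by
    intro t ht
    refine ⟨Or.inl ⟨t, ht.le, rfl⟩, ?_⟩
    rw [infA t ht, e2_sub_s10, norm_e2,
      show (t-t)^2 + (t-0)^2 = t^2 by ring, Real.sqrt_sq ht.le]
  have unit : ∀ t : ℝ, 0 < t → ‖e2 0 t‖⁻¹ • e2 0 t = e2 0 1 := by
    intro t ht
    rw [norm_e2, show (0:ℝ)^2 + t^2 = t^2 by ring, Real.sqrt_sq ht.le, e2_smul]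
    exact e2_congr (by ring) (inv_mul_cancel₀ ht.ne')
  constructor
  · intro a ha b hb ba hba ab hab
    obtain ⟨t, ht, rfl⟩ := memAB a ha
    obtain ⟨s, hs, rfl⟩ := memBA b hb
    rw [projB t ht ba hba, projA s hs ab hab]
    have h1 : e2 s s - e2 s 0 = e2 0 s := by
      rw [e2_sub_s10]; exact e2_congr (by ring) (by ring)
    have h2 : e2 t 0 - e2 t (-t) = e2 0 t := by
      rw [e2_sub_s10]; exact e2_congr (by ring) (by ring)
    rw [h1, h2, unit s hs, unit t ht]
  · rintro ⟨α, hα, δ, hδ, H⟩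
    set t := δ / 2 with htdef
    have ht : 0 < t := by positivity
    have hs2 : Real.sqrt 2 < 2 := by
      nlinarith [Real.sq_sqrt (show (0:ℝ) ≤ 2 by norm_num), Real.sqrt_nonneg 2]
    have hball : ∀ y : ℝ, y^2 = t^2 → e2 t y ∈ ball (0 : EuclideanSpace ℝ (Fin 2)) δ := by
      intro y hy
      rw [mem_ball, dist_eq_norm, sub_zero, norm_e2, hy,
        show t^2 + t^2 = 2 * t^2 by ring, Real.sqrt_mul (by norm_num), Real.sqrt_sq ht.le]
      calc Real.sqrt 2 * t < 2 * t := by nlinarith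
        _ ≤ δ := by rw [htdef]; ring_nf; linarith [hδ]
    have haB : e2 t (-t) ∉ B := by
      rintro (⟨s, hs, h⟩ | ⟨s, hs, h⟩)
      · have := (e2_inj h).2; linarith
      · obtain ⟨h1, h2⟩ := e2_inj h; linarith
    have hbA : e2 t t ∉ A := by
      rintro (⟨s, hs, h⟩ | ⟨s, hs, h⟩)
      · have := (e2_inj h).2; linarith
      · obtain ⟨h1, h2⟩ := e2_inj h; linarith
    have hmemA : e2 t (-t) ∈ (A \ B) ∩ ball (0 : EuclideanSpace ℝ (Fin 2)) δ :=
      ⟨⟨Or.inr ⟨t, ht.le, rfl⟩, haB⟩, hball (-t) (by ring)⟩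
    have hmemB : e2 t t ∈ (B \ A) ∩ ball (0 : EuclideanSpace ℝ (Fin 2)) δ :=
      ⟨⟨Or.inr ⟨t, ht.le, rfl⟩, hbA⟩, hball t rfl⟩
    have key := H _ hmemA _ hmemB _ (projBmem t ht) _ (projAmem t ht)
    have e1 : e2 t (-t) - e2 t 0 = e2 0 (-t) := by
      rw [e2_sub_s10]; exact e2_congr (by ring) (by ring)
    have e2' : e2 t t - e2 t 0 = e2 0 t := by
      rw [e2_sub_s10]; exact e2_congr (by ring) (by ring)
    rw [e1, e2', inner_e2, norm_e2, norm_e2,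
      show (0:ℝ)^2 + (-t)^2 = t^2 by ring, show (0:ℝ)^2 + t^2 = t^2 by ring,
      Real.sqrt_sq ht.le] at key
    nlinarith [key, mul_pos ht ht]
end
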